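/- arXiv:2103.04561 — 2 statements merged into one kernel-verified Lean document; each statement's English description precedes it below -/
import Mathlib

section
/- Euler's pentagonal number theorem in theta form: η(τ) = q^{1/24} ∏_{n≥1}(1 - qⁿ) = q^{1/24} ∑_{n∈ℤ} (-1)ⁿ q^{n(3n+1)/2} = e^{-iπ/6} θ[1/6; 1/2](0; 3τ), where θ[a;b](0;τ) = ∑_{n∈ℤ} e^{2πi(n+a)b} q^{(1/2)(n+a)²}. -/
open Complex Filter Topology Finset

/-!
Mathlib proves Euler's identity `∏ (1 - xⁿ⁺¹) = ∑ₖ (-1)ᵏ (x^{k(3k+1)/2} - x^{(k+1)(3k+2)/2})`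
in any topological ring, provided the series and products of its telescoping argument converge.
In a complete normed ring with `‖x‖ < 1` all of them are dominated by geometric series, since the
partial products `∏ᵢ (1 - x^{k+i+1})` are bounded by `exp (1 - ‖x‖)⁻¹` uniformly in `k` and in the
number of factors. Regrouping the pairs as one sum over `ℤ` and taking `x = q = e^{2πiτ}` gives
the first identity; the theta form then holds termwise, as
`e^{-iπ/6} e^{iπ(n+1/6)} e^{3πiτ(n+1/6)²} = q^{1/24} (-1)ⁿ q^{n(3n+1)/2}`.
-/

theorem natAbs_le_pentagonal (k : ℤ) : k.natAbs ≤ pentagonal k := by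
  have h := two_mul_natCast_pentagonal k
  zify
  rcases le_or_gt 0 k with hk | hk
  · rw [abs_of_nonneg hk]; nlinarith
  · rw [abs_of_neg hk]; nlinarith

section

variable {R : Type*} [NormedCommRing R] [NormOneClass R] {x : R}

theorem norm_pow_le_pow_of_le (hx : ‖x‖ ≤ 1) {m n : ℕ} (hmn : m ≤ n) : ‖x ^ n‖ ≤ ‖x‖ ^ m :=
  (norm_pow_le x n).trans (pow_le_pow_of_le_one (norm_nonneg x) hx hmn)

theorem norm_prod_one_sub_pow_le (hx : ‖x‖ < 1) (k n : ℕ) :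
    ‖∏ i ∈ range n, (1 - x ^ (k + i + 1))‖ ≤ Real.exp (1 - ‖x‖)⁻¹ := by
  have hgeom : ∑ i ∈ range n, ‖-x ^ (k + i + 1)‖ ≤ (1 - ‖x‖)⁻¹ := by
    calc ∑ i ∈ range n, ‖-x ^ (k + i + 1)‖ ≤ ∑ i ∈ range n, ‖x‖ ^ i := by
          refine sum_le_sum fun i _ ↦ ?_
          rw [norm_neg]
          exact norm_pow_le_pow_of_le hx.le (by omega)
      _ ≤ (1 - ‖x‖)⁻¹ := by
          rw [← tsum_geometric_of_lt_one (norm_nonneg x) hx]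
          exact (summable_geometric_of_lt_one (norm_nonneg x) hx).sum_le_tsum _
            fun i _ ↦ pow_nonneg (norm_nonneg x) i
  have h := (range n).norm_prod_one_add_sub_one_le fun i ↦ -x ^ (k + i + 1)
  simp only [← sub_eq_add_neg] at h
  calc ‖∏ i ∈ range n, (1 - x ^ (k + i + 1))‖
      ≤ ‖∏ i ∈ range n, (1 - x ^ (k + i + 1)) - 1‖ + ‖(1 : R)‖ := norm_le_norm_sub_add _ _
    _ ≤ Real.exp (1 - ‖x‖)⁻¹ := by
      rw [norm_one]
      linarith [Real.exp_le_exp.mpr hgeom]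

theorem norm_pow_mul_prod_one_sub_pow_le (hx : ‖x‖ < 1) (k n : ℕ) :
    ‖x ^ ((k + 1) * n) * ∏ i ∈ range (n + 1), (1 - x ^ (k + i + 1))‖ ≤
      Real.exp (1 - ‖x‖)⁻¹ * ‖x‖ ^ n := by
  rw [mul_comm (Real.exp _)]
  refine (norm_mul_le _ _).trans (mul_le_mul ?_ (norm_prod_one_sub_pow_le hx k (n + 1))
    (norm_nonneg _) (pow_nonneg (norm_nonneg x) n))
  exact norm_pow_le_pow_of_le hx.le (by nlinarith)

theorem norm_negOnePow_mul_pow_pentagonal_le (hx : ‖x‖ < 1) (k : ℤ) :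
    ‖(k.negOnePow : R) * x ^ pentagonal k‖ ≤ ‖x‖ ^ k.natAbs := by
  have hsign : ‖((k.negOnePow : ℤ) : R)‖ = 1 := by
    rcases Int.units_eq_one_or k.negOnePow with h | h <;> simp [h]
  refine (norm_mul_le _ _).trans ?_
  rw [hsign, one_mul]
  exact norm_pow_le_pow_of_le hx.le (natAbs_le_pentagonal k)

theorem norm_tsum_pow_mul_prod_one_sub_pow_le (hx : ‖x‖ < 1) (k : ℕ) :
    ‖∑' n, x ^ ((k + 1) * n) * ∏ i ∈ range (n + 1), (1 - x ^ (k + i + 1))‖ ≤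
      Real.exp (1 - ‖x‖)⁻¹ * (1 - ‖x‖)⁻¹ :=
  tsum_of_norm_bounded ((hasSum_geometric_of_lt_one (norm_nonneg x) hx).mul_left _)
    (norm_pow_mul_prod_one_sub_pow_le hx k)

/-- The remainder term in `Pentagonal.tprod_one_sub_pow` tends to zero. -/
theorem tendsto_pentagonal_remainder (hx : ‖x‖ < 1) :
    Tendsto (fun k : ℕ ↦ (-1) ^ (k + 1) * x ^ ((k + 1) * (3 * k + 4) / 2) *
      ∑' n, x ^ ((k + 1) * n) * ∏ i ∈ range (n + 1), (1 - x ^ (k + i + 1))) atTop (𝓝 0) := by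
  set C := Real.exp (1 - ‖x‖)⁻¹ * (1 - ‖x‖)⁻¹
  refine squeeze_zero_norm (fun k ↦ ?_) (by
    simpa using (tendsto_pow_atTop_nhds_zero_of_lt_one (norm_nonneg x) hx).mul_const C)
  have hexp : k ≤ (k + 1) * (3 * k + 4) / 2 := (Nat.le_div_iff_mul_le two_pos).mpr (by nlinarith)
  have hsign : ‖(-1 : R) ^ (k + 1)‖ ≤ 1 := (norm_pow_le _ _).trans (by simp)
  calc _ ≤ ‖(-1 : R) ^ (k + 1) * x ^ ((k + 1) * (3 * k + 4) / 2)‖ * C :=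
        (norm_mul_le _ _).trans
          (mul_le_mul_of_nonneg_left (norm_tsum_pow_mul_prod_one_sub_pow_le hx k) (norm_nonneg _))
    _ ≤ ‖x‖ ^ k * C := by
        refine mul_le_mul_of_nonneg_right ?_ (by positivity)
        refine ((norm_mul_le _ _).trans (mul_le_of_le_one_left (norm_nonneg _) hsign)).trans ?_
        exact norm_pow_le_pow_of_le hx.le hexp

variable [CompleteSpace R]

theorem summable_pow_mul_prod_one_sub_pow (hx : ‖x‖ < 1) (k : ℕ) :
    Summable fun n ↦ x ^ ((k + 1) * n) * ∏ i ∈ range (n + 1), (1 - x ^ (k + i + 1)) :=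
  .of_norm_bounded ((summable_geometric_of_lt_one (norm_nonneg x) hx).mul_left _)
    (norm_pow_mul_prod_one_sub_pow_le hx k)

theorem multipliable_one_sub_pow_add (hx : ‖x‖ < 1) (k : ℕ) :
    Multipliable fun n ↦ 1 - x ^ (n + k + 1) := by
  simp only [sub_eq_add_neg]
  refine multipliable_one_add_of_summable
    ((summable_geometric_of_lt_one (norm_nonneg x) hx).of_nonneg_of_le (fun _ ↦ norm_nonneg _)
      fun n ↦ ?_)
  rw [norm_neg]
  exact norm_pow_le_pow_of_le hx.le (by omega)

theorem summable_negOnePow_mul_pow_pentagonal (hx : ‖x‖ < 1) :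
    Summable fun k : ℤ ↦ (k.negOnePow : R) * x ^ pentagonal k := by
  have hgeom := summable_geometric_of_lt_one (norm_nonneg x) hx
  refine .of_norm_bounded (.of_nat_of_neg ?_ ?_) (norm_negOnePow_mul_pow_pentagonal_le hx)
  all_goals simpa using hgeom

theorem tprod_one_sub_pow_eq_tsum_negOnePow_mul_pow_pentagonal (hx : ‖x‖ < 1) :
    ∏' n, (1 - x ^ (n + 1)) = ∑' k : ℤ, (k.negOnePow : R) * x ^ pentagonal k := by
  set g : ℤ → R := fun k ↦ (k.negOnePow : R) * x ^ pentagonal k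
  have hg : Summable fun k ↦ g (-k) :=
    (summable_negOnePow_mul_pow_pentagonal hx).comp_injective neg_injective
  have hpairs (k : ℕ) : (-1) ^ k * (x ^ pentagonal (-k) - x ^ pentagonal (k + 1)) =
      g (-k) + g (-(-(k + 1))) := by
    simp only [g, neg_neg, Int.negOnePow_neg, Int.negOnePow_succ, Units.val_neg, Int.cast_neg,
      Int.cast_negOnePow_natCast]
    ring
  have hrhs : Summable fun k : ℕ ↦ (-1) ^ k * (x ^ pentagonal (-k) - x ^ pentagonal (k + 1)) := by
    simpa only [hpairs] using hg.nat_add_neg_add_one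
  rw [Pentagonal.tprod_one_sub_pow (tendsto_pow_atTop_nhds_zero_of_norm_lt_one hx)
    (summable_pow_mul_prod_one_sub_pow hx) (multipliable_one_sub_pow_add hx) hrhs
    (tendsto_pentagonal_remainder hx), ← tsum_comp_neg g, ← tsum_nat_add_neg_add_one hg]
  exact tsum_congr hpairs

end

theorem exp_theta_term_eq (τ : ℂ) (n : ℤ) :
    exp (-(Real.pi * I / 6)) * (exp (2 * Real.pi * I * ((n : ℂ) + 1 / 6) * (1 / 2)) *
      exp (Real.pi * I * (3 * τ) * ((n : ℂ) + 1 / 6) ^ 2)) =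
    exp (2 * Real.pi * I * τ / 24) *
      ((-1 : ℂ) ^ n * exp (2 * Real.pi * I * τ * ((n : ℂ) * (3 * (n : ℂ) + 1) / 2))) := by
  have hsign : (-1 : ℂ) ^ n = exp (n * (Real.pi * I)) := by rw [exp_int_mul, exp_pi_mul_I]
  rw [hsign, ← exp_add, ← exp_add, ← exp_add, ← exp_add]
  congr 1
  ring

/-- Euler's pentagonal number theorem in theta form:
`η(τ) = q^{1/24} ∏_{n≥1}(1-qⁿ) = q^{1/24} ∑_{n∈ℤ} (-1)ⁿ q^{n(3n+1)/2}
      = e^{-iπ/6} θ[1/6;1/2](0;3τ)`,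
where `q = e^{2πiτ}` and `θ[a;b](0;τ) = ∑_{n∈ℤ} e^{2πi(n+a)b} e^{πiτ(n+a)²}`. -/
theorem stmt16 (τ : ℂ) (hτ : 0 < τ.im)
    (q : ℂ) (hq : q = Complex.exp (2 * Real.pi * I * τ))
    (η : ℂ) (hη : η = Complex.exp (2 * Real.pi * I * τ / 24) * ∏' n : ℕ, (1 - q^(n+1))) :
    η = Complex.exp (2 * Real.pi * I * τ / 24) *
          ∑' n : ℤ, (-1 : ℂ)^n * Complex.exp (2 * Real.pi * I * τ * ((n : ℂ)*(3*(n : ℂ)+1)/2)) ∧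
    η = Complex.exp (-(Real.pi * I / 6)) *
          ∑' n : ℤ, Complex.exp (2 * Real.pi * I * ((n : ℂ) + 1/6) * (1/2)) *
            Complex.exp (Real.pi * I * (3*τ) * ((n : ℂ) + 1/6)^2) := by
  have hq1 : ‖q‖ < 1 := hq ▸ UpperHalfPlane.norm_exp_two_pi_I_lt_one ⟨τ, hτ⟩
  have hpentagonal : ∏' n : ℕ, (1 - q ^ (n + 1)) =
      ∑' n : ℤ, (-1 : ℂ) ^ n * exp (2 * Real.pi * I * τ * ((n : ℂ) * (3 * (n : ℂ) + 1) / 2)) := by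
    rw [tprod_one_sub_pow_eq_tsum_negOnePow_mul_pow_pentagonal hq1, ← tsum_comp_neg]
    refine tsum_congr fun n ↦ ?_
    rw [Int.negOnePow_neg, Int.cast_negOnePow, hq, ← exp_nat_mul]
    have hexp : (pentagonal (-n) : ℂ) = n * (3 * n + 1) / 2 := by
      have h := congrArg (Int.cast : ℤ → ℂ) (two_mul_natCast_pentagonal_neg n)
      push_cast at h
      linear_combination h / 2
    rw [hexp, mul_comm (_ / 2 : ℂ)]
  have hη' : η = exp (2 * Real.pi * I * τ / 24) *
      ∑' n : ℤ, (-1 : ℂ) ^ n * exp (2 * Real.pi * I * τ * ((n : ℂ) * (3 * (n : ℂ) + 1) / 2)) := by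
    rw [hη, hpentagonal]
  refine ⟨hη', hη'.trans ?_⟩
  rw [← tsum_mul_left, ← tsum_mul_left]
  exact tsum_congr fun n ↦ (exp_theta_term_eq τ n).symm
end

section
/- Define S_ℓ(q) as the formal double sum (∑_{m,n ≥ 0} - ∑_{m,n < 0}) (-1)^{m+ℓ} q^{(1/2)(m + 2n - ℓ + 1/2)² - (n - ℓ/2)²} over integers m, n, for fixed ℓ ∈ ℤ. Then S_{ℓ+2}(q) = S_ℓ(q): the double series for ℓ and for ℓ+2 agree term by term after the bijection (m,n) ↦ (m, n+1) on the index set (with the appropriate boundary terms reorganized), i.e. the two series define the same q-expansion. -/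
/-!
Since `Q_{ℓ+2}(m, n) = Q_ℓ(m, n - 1)` and the sign `(-1)^{m+ℓ}` does not depend on `n`, the
series `S_{ℓ+2}` is `S_ℓ` with both quadrants moved down by one row. The difference is therefore
the sum of the terms of `S_ℓ` on the full row `n = -1`, which vanishes: the reflection
`m ↦ 2ℓ + 3 - m` preserves `Q_ℓ(m, -1)` and flips the parity of `m`. All rearrangements are
justified by absolute convergence, as `Q_ℓ(m, n)` grows linearly in `m + n` on each quadrant.
-/

open Complex

/-- The exponent `Q_ℓ(m,n) = (1/2)(m + 2n - ℓ + 1/2)² - (n - ℓ/2)²`. -/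
noncomputable def Qexp (ℓ m n : ℤ) : ℝ :=
  (1/2) * ((m : ℝ) + 2*(n : ℝ) - (ℓ : ℝ) + 1/2)^2 - ((n : ℝ) - (ℓ : ℝ)/2)^2

/-- The series `S_ℓ(τ) = (∑_{m,n≥0} - ∑_{m,n<0}) (-1)^{m+ℓ} q^{Q_ℓ(m,n)}` with
`q = e^{2πiτ}`; the sum over `m,n < 0` is parametrized by `m = -1-m'`, `n = -1-n'`
with `m', n' ∈ ℕ`. -/
noncomputable def Sser (ℓ : ℤ) (τ : ℂ) : ℂ :=
  (∑' p : ℕ × ℕ, (-1 : ℂ)^((p.1 : ℤ) + ℓ) *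
      Complex.exp (2 * Real.pi * I * τ * (Qexp ℓ (p.1 : ℤ) (p.2 : ℤ) : ℂ))) -
  (∑' p : ℕ × ℕ, (-1 : ℂ)^((-1 - (p.1 : ℤ)) + ℓ) *
      Complex.exp (2 * Real.pi * I * τ * (Qexp ℓ (-1 - (p.1 : ℤ)) (-1 - (p.2 : ℤ)) : ℂ)))

noncomputable def quadrantDiff {E : Type*} [AddCommGroup E] [TopologicalSpace E]
    (f : ℤ → ℤ → E) : E :=
  ∑' p : ℕ × ℕ, f p.1 p.2 - ∑' p : ℕ × ℕ, f (-1 - p.1) (-1 - p.2)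

section QuadrantSums

variable {E : Type*} [AddCommGroup E] [UniformSpace E] [IsUniformAddGroup E] [CompleteSpace E]

lemma Summable.prod_row_zero {f : ℕ → ℕ → E} (hf : Summable fun p : ℕ × ℕ => f p.1 p.2) :
    Summable fun m => f m 0 :=
  hf.comp_injective (Prod.mk_left_injective 0)

lemma tsum_prod_nat_eq_tsum_row_zero_add [T2Space E] {f : ℕ → ℕ → E}
    (hf : Summable fun p : ℕ × ℕ => f p.1 p.2) :
    ∑' p : ℕ × ℕ, f p.1 p.2 = ∑' m, f m 0 + ∑' p : ℕ × ℕ, f p.1 (p.2 + 1) := by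
  have htail : Summable fun p : ℕ × ℕ => f p.1 (p.2 + 1) :=
    hf.comp_injective (Prod.map_injective.mpr ⟨Function.injective_id, Nat.succ_injective⟩)
  rw [hf.tsum_prod, htail.tsum_prod, ← hf.prod_row_zero.tsum_add htail.prod]
  exact tsum_congr fun m => (hf.prod_factor m).tsum_eq_zero_add

lemma quadrantDiff_comp_sub_one [T2Space E] (f : ℤ → ℤ → E)
    (hpos : Summable fun p : ℕ × ℕ => f p.1 (p.2 - 1))
    (hneg : Summable fun p : ℕ × ℕ => f (-1 - p.1) (-1 - p.2)) :
    quadrantDiff (fun m n => f m (n - 1)) = quadrantDiff f + ∑' m : ℤ, f m (-1) := by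
  have hrow : ∑' m : ℤ, f m (-1) = ∑' m : ℕ, f m (-1) + ∑' m : ℕ, f (-1 - m) (-1) := by
    have hrowP : Summable fun m : ℕ => f m (-1) := by
      simpa using hpos.prod_row_zero (f := fun m n => f m (n - 1))
    have hrowN : Summable fun m : ℕ => f (-(m + 1)) (-1) := by
      simpa [neg_add_rev, ← sub_eq_add_neg] using
        hneg.prod_row_zero (f := fun m n => f (-1 - m) (-1 - n))
    simp only [tsum_of_nat_of_neg_add_one (f := fun m => f m (-1)) hrowP hrowN, neg_add_rev,
      ← sub_eq_add_neg]
  have hP := tsum_prod_nat_eq_tsum_row_zero_add (f := fun m n => f m (n - 1)) hpos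
  have hN := tsum_prod_nat_eq_tsum_row_zero_add (f := fun m n => f (-1 - m) (-1 - n)) hneg
  push_cast at hP hN
  simp only [quadrantDiff, hP, hN, hrow, add_sub_cancel_right, sub_sub]
  abel

end QuadrantSums

lemma tsum_eq_zero_of_comp_equiv_eq_neg {E : Type*} [AddCommGroup E] [TopologicalSpace E]
    [IsTopologicalAddGroup E] [T2Space E] [IsAddTorsionFree E] {α : Type*} {g : α → E}
    (e : α ≃ α) (h : ∀ a, g (e a) = -g a) :
    ∑' a, g a = 0 := by
  have := e.tsum_eq g
  simp only [h] at this
  rw [tsum_neg] at this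
  exact self_eq_neg.mp this.symm

noncomputable def Sterm (ℓ : ℤ) (τ : ℂ) (m n : ℤ) : ℂ :=
  (-1 : ℂ) ^ (m + ℓ) * Complex.exp (2 * Real.pi * I * τ * (Qexp ℓ m n : ℂ))

lemma Sser_eq_quadrantDiff (ℓ : ℤ) (τ : ℂ) : Sser ℓ τ = quadrantDiff (Sterm ℓ τ) := rfl

lemma Qexp_add_two (ℓ m n : ℤ) : Qexp (ℓ + 2) m n = Qexp ℓ m (n - 1) := by
  unfold Qexp; push_cast; ring

lemma Qexp_neg_one_sub (ℓ m n : ℤ) : Qexp ℓ (-1 - m) (-1 - n) = Qexp (-ℓ - 2) m n := by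
  unfold Qexp; push_cast; ring

lemma Qexp_reflect (ℓ m : ℤ) : Qexp ℓ (2 * ℓ + 3 - m) (-1) = Qexp ℓ m (-1) := by
  unfold Qexp; push_cast; ring

lemma exists_add_sub_le_Qexp (ℓ : ℤ) : ∃ C : ℝ, ∀ m n : ℕ, (m : ℝ) + n - C ≤ Qexp ℓ m n := by
  refine ⟨(ℓ : ℝ) ^ 2 / 2 + ℓ, fun m n => ?_⟩
  unfold Qexp
  push_cast
  nlinarith [sq_nonneg ((m : ℝ) - ℓ - 1/2), sq_nonneg ((n : ℝ) - ℓ / 2),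
    mul_nonneg (Nat.cast_nonneg m : (0:ℝ) ≤ m) (Nat.cast_nonneg n : (0:ℝ) ≤ n)]

lemma summable_exp_neg_mul_of_add_sub_le {Q : ℕ × ℕ → ℝ} {t C : ℝ} (ht : 0 < t)
    (hQ : ∀ p : ℕ × ℕ, (p.1 : ℝ) + p.2 - C ≤ Q p) :
    Summable fun p => Real.exp (-t * Q p) := by
  have hr0 : 0 ≤ Real.exp (-t) := (Real.exp_pos _).le
  have hr1 : Real.exp (-t) < 1 := Real.exp_lt_one_iff.mpr (neg_lt_zero.mpr ht)
  have hgeom := summable_geometric_of_lt_one hr0 hr1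
  refine Summable.of_nonneg_of_le (fun p => (Real.exp_pos _).le) (fun p => ?_)
    ((hgeom.mul_of_nonneg hgeom (fun n => pow_nonneg hr0 n) (fun n => pow_nonneg hr0 n)).mul_left
      (Real.exp (t * C)))
  rw [← Real.exp_nat_mul, ← Real.exp_nat_mul, ← Real.exp_add, ← Real.exp_add, Real.exp_le_exp]
  nlinarith [hQ p]

lemma norm_Sterm (ℓ : ℤ) (τ : ℂ) (m n : ℤ) :
    ‖Sterm ℓ τ m n‖ = Real.exp (-(2 * Real.pi * τ.im) * Qexp ℓ m n) := by
  rw [Sterm, norm_mul, norm_zpow, norm_neg, norm_one, one_zpow, one_mul, Complex.norm_exp]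
  congr 1
  simp [Complex.mul_re, Complex.mul_im]

lemma summable_Sterm_nat (ℓ : ℤ) {τ : ℂ} (hτ : 0 < τ.im) :
    Summable fun p : ℕ × ℕ => Sterm ℓ τ p.1 p.2 := by
  obtain ⟨C, hC⟩ := exists_add_sub_le_Qexp ℓ
  refine Summable.of_norm ?_
  simpa only [norm_Sterm] using
    summable_exp_neg_mul_of_add_sub_le (by positivity) (fun p => hC p.1 p.2)

lemma summable_Sterm_neg_nat (ℓ : ℤ) {τ : ℂ} (hτ : 0 < τ.im) :
    Summable fun p : ℕ × ℕ => Sterm ℓ τ (-1 - p.1) (-1 - p.2) := by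
  refine Summable.of_norm ?_
  simpa only [norm_Sterm, Qexp_neg_one_sub] using (summable_Sterm_nat (-ℓ - 2) hτ).norm

lemma Sterm_add_two (ℓ : ℤ) (τ : ℂ) (m n : ℤ) : Sterm (ℓ + 2) τ m n = Sterm ℓ τ m (n - 1) := by
  rw [Sterm, Sterm, Qexp_add_two, ← add_assoc, zpow_add₀ (by norm_num), Even.neg_one_zpow even_two,
    mul_one]

lemma Sterm_reflect (ℓ : ℤ) (τ : ℂ) (m : ℤ) :
    Sterm ℓ τ (2 * ℓ + 3 - m) (-1) = -Sterm ℓ τ m (-1) := by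
  have hodd : Odd (2 * (ℓ + 1 - m) + 1) := odd_two_mul_add_one _
  rw [Sterm, Sterm, Qexp_reflect, show 2 * ℓ + 3 - m + ℓ = m + ℓ + (2 * (ℓ + 1 - m) + 1) by ring,
    zpow_add₀ (by norm_num), hodd.neg_one_zpow, mul_neg_one, neg_mul]

/-- `S_{ℓ+2}(q) = S_ℓ(q)`. -/
theorem stmt19 (ℓ : ℤ) (τ : ℂ) (hτ : 0 < τ.im) :
    Sser (ℓ + 2) τ = Sser ℓ τ := by
  have hshift : Sterm (ℓ + 2) τ = fun m n => Sterm ℓ τ m (n - 1) :=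
    funext fun m => funext (Sterm_add_two ℓ τ m)
  have hpos : Summable fun p : ℕ × ℕ => Sterm ℓ τ p.1 (p.2 - 1) := by
    simpa only [Sterm_add_two] using summable_Sterm_nat (ℓ + 2) hτ
  rw [Sser_eq_quadrantDiff, Sser_eq_quadrantDiff, hshift,
    quadrantDiff_comp_sub_one _ hpos (summable_Sterm_neg_nat ℓ hτ),
    tsum_eq_zero_of_comp_equiv_eq_neg (Equiv.subLeft (2 * ℓ + 3)) (Sterm_reflect ℓ τ), add_zero]
end
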